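/- Let Θ₀ ≤ λ ≤ 1 and suppose the map (z,φ) ↦ F_{z,λ}(φ) on ℝ × B¹(ℝ⁺) attains its global minimum at (ζ, f) with f nonnegative. Then the following virial-type identities hold: (1) ‖f′‖₂² − ‖(t−ζ)f‖₂² + (λ/4)‖f‖₄⁴ = 0; (2) 2‖f′‖₂² + (5λ/4)‖f‖₄⁴ = λ‖f‖₂²; (3) 2‖(t−ζ)f‖₂² + (3λ/4)‖f‖₄⁴ = λ‖f‖₂². Here ‖·‖_p denotes the L^p((0,∞)) norm and (t−ζ)f denotes the function t ↦ (t−ζ)f(t). -/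

import Mathlib

open MeasureTheory Set Real Filter

noncomputable section

/-- Membership in the space `B¹(ℝ⁺)`: square integrable on `(0,∞)`, with square
integrable derivative and such that `t ↦ t·φ(t)` is square integrable. -/
def MemB1 (φ : ℝ → ℝ) : Prop :=
  ContinuousWithinAt φ (Ici 0) 0 ∧
  (∀ t ∈ Ioi (0:ℝ), DifferentiableAt ℝ φ t) ∧
  IntegrableOn (fun t => (φ t) ^ 2) (Ioi 0) ∧
  IntegrableOn (fun t => (deriv φ t) ^ 2) (Ioi 0) ∧
  IntegrableOn (fun t => (t * φ t) ^ 2) (Ioi 0)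

/-- The Rayleigh quotient of the de Gennes operator `-d²/dt² + (t-ξ)²`
(Neumann realization on `L²((0,∞))`). -/
def RQ (ξ : ℝ) (φ : ℝ → ℝ) : ℝ :=
  (∫ t in Ioi (0:ℝ), ((deriv φ t) ^ 2 + (t - ξ) ^ 2 * (φ t) ^ 2)) /
  (∫ t in Ioi (0:ℝ), (φ t) ^ 2)

/-- The ground state energy `μ₁(ξ)` of the de Gennes operator. -/
def mu1 (ξ : ℝ) : ℝ :=
  sInf {r | ∃ φ, MemB1 φ ∧ (0 < ∫ t in Ioi (0:ℝ), (φ t) ^ 2) ∧ r = RQ ξ φ}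

/-- `Θ₀ = inf_ξ μ₁(ξ)`. -/
def Theta0 : ℝ := sInf (Set.range mu1)

/-- The Ginzburg–Landau type functional `F_{z,λ}`. -/
def GLF (z lam : ℝ) (φ : ℝ → ℝ) : ℝ :=
  ∫ t in Ioi (0:ℝ),
    ((deriv φ t) ^ 2 + (t - z) ^ 2 * (φ t) ^ 2 + lam / 2 * (φ t) ^ 4 - lam * (φ t) ^ 2)

/-- `f` minimizes `F_{z,λ}` over `B¹(ℝ⁺)`. -/
def IsMinimizer (z lam : ℝ) (f : ℝ → ℝ) : Prop :=
  MemB1 f ∧ ∀ φ, MemB1 φ → GLF z lam f ≤ GLF z lam φ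

/-- `(ζ, f)` is a global minimum of the map `(z, φ) ↦ F_{z,λ}(φ)` on `ℝ × B¹(ℝ⁺)`. -/
def IsGlobalMin (lam ζ : ℝ) (f : ℝ → ℝ) : Prop :=
  MemB1 f ∧ ∀ z : ℝ, ∀ φ, MemB1 φ → GLF ζ lam f ≤ GLF z lam φ

/-!
A Derrick–Pohozaev argument: move the minimiser along two one-parameter families that stay
admissible, the amplitudes `c * f` at `z = ζ`, and the dilations `t ↦ f (s * t)` at `z = ζ / s`,
so that the potential `(t - z)²` is dilated together with `f` (this is where minimality in `z`
enters). With `A = ‖f'‖₂²`, `B = ‖(t - ζ) f‖₂²`, `C = ‖f‖₄⁴`, `D = ‖f‖₂²`, the functional equals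
`c² (A + B - λ D) + λ c⁴ C / 2` along the first family and `s A + s⁻³ B + s⁻¹ (λ C / 2 - λ D)`
along the second. Stationarity at `c = 1` and at `s = 1` gives `A + B + λ C - λ D = 0` and
`A - 3 B - λ C / 2 + λ D = 0`, and the three identities are linear combinations of these.
-/

theorem abs_sub_le_integral_abs_of_hasDerivAt {g g' : ℝ → ℝ} {s : Set ℝ} {a b : ℝ}
    (hab : uIcc a b ⊆ s) (hg : ∀ x ∈ s, HasDerivAt g (g' x) x) (hg' : IntegrableOn g' s) :
    |g b - g a| ≤ ∫ x in s, |g' x| := by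
  have hint : IntervalIntegrable g' volume a b :=
    intervalIntegrable_iff.2 (hg'.mono_set (uIoc_subset_uIcc.trans hab))
  rw [← intervalIntegral.integral_eq_sub_of_hasDerivAt (fun x hx => hg x (hab hx)) hint]
  calc |∫ x in a..b, g' x| = ‖∫ x in a..b, g' x‖ := (norm_eq_abs _).symm
    _ ≤ ∫ x in uIoc a b, ‖g' x‖ := intervalIntegral.norm_integral_le_integral_norm_uIoc
    _ ≤ ∫ x in s, |g' x| :=
      setIntegral_mono_set hg'.abs (Eventually.of_forall fun _ => abs_nonneg _)
        (uIoc_subset_uIcc.trans hab).eventuallyLE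

namespace MemB1

variable {f : ℝ → ℝ}

theorem aestronglyMeasurable (hf : MemB1 f) :
    AEStronglyMeasurable f (volume.restrict (Ioi 0)) :=
  ContinuousOn.aestronglyMeasurable (fun t ht => (hf.2.1 t ht).continuousAt.continuousWithinAt)
    measurableSet_Ioi

theorem memLp_two (hf : MemB1 f) : MemLp f 2 (volume.restrict (Ioi 0)) :=
  (memLp_two_iff_integrable_sq hf.aestronglyMeasurable).2 hf.2.2.1

theorem memLp_two_deriv (hf : MemB1 f) : MemLp (deriv f) 2 (volume.restrict (Ioi 0)) :=
  (memLp_two_iff_integrable_sq (measurable_deriv f).aestronglyMeasurable).2 hf.2.2.2.1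

theorem memLp_two_id_mul (hf : MemB1 f) :
    MemLp (fun t => t * f t) 2 (volume.restrict (Ioi 0)) :=
  (memLp_two_iff_integrable_sq
    (aestronglyMeasurable_id.mul hf.aestronglyMeasurable)).2 hf.2.2.2.2

theorem integrableOn_sub_sq_mul_sq (hf : MemB1 f) (z : ℝ) :
    IntegrableOn (fun t => (t - z) ^ 2 * f t ^ 2) (Ioi 0) := by
  have hL2 := hf.memLp_two_id_mul.sub (hf.memLp_two.const_mul z)
  refine ((memLp_two_iff_integrable_sq hL2.1).1 hL2).congr (Eventually.of_forall fun t => ?_)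
  simp only [Pi.sub_apply]
  ring

theorem integrableOn_mul_deriv (hf : MemB1 f) :
    IntegrableOn (fun t => 2 * f t * deriv f t) (Ioi 0) :=
  (hf.memLp_two.const_mul 2).integrable_mul hf.memLp_two_deriv

theorem exists_sq_le (hf : MemB1 f) : ∃ M, ∀ t ∈ Ioi (0:ℝ), f t ^ 2 ≤ M := by
  have hderiv : ∀ x ∈ Ioi (0:ℝ), HasDerivAt (fun t => f t ^ 2) (2 * f x * deriv f x) x :=
    fun x hx => by simpa [mul_comm] using ((hf.2.1 x hx).hasDerivAt.fun_pow 2)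
  refine ⟨f 1 ^ 2 + ∫ x in Ioi (0:ℝ), |2 * f x * deriv f x|, fun t ht => ?_⟩
  have hsub : uIcc 1 t ⊆ Ioi 0 := fun x hx =>
    lt_of_lt_of_le (lt_min one_pos ht) hx.1
  have := abs_sub_le_integral_abs_of_hasDerivAt hsub hderiv hf.integrableOn_mul_deriv
  linarith [le_abs_self (f t ^ 2 - f 1 ^ 2)]

theorem integrableOn_pow_four (hf : MemB1 f) : IntegrableOn (fun t => f t ^ 4) (Ioi 0) := by
  obtain ⟨M, hM⟩ := hf.exists_sq_le
  refine Integrable.mono' (hf.2.2.1.const_mul M) (hf.aestronglyMeasurable.pow 4) ?_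
  refine (ae_restrict_iff' measurableSet_Ioi).2 (Eventually.of_forall fun t ht => ?_)
  rw [norm_of_nonneg (by positivity), show f t ^ 4 = f t ^ 2 * f t ^ 2 by ring]
  exact mul_le_mul_of_nonneg_right (hM t ht) (sq_nonneg _)

theorem deriv_const_mul_comp_mul (hf : MemB1 f) (c : ℝ) {s t : ℝ} (hs : 0 < s)
    (ht : t ∈ Ioi (0:ℝ)) :
    deriv (fun t => c * f (s * t)) t = c * (s * deriv f (s * t)) := by
  have hd := (hf.2.1 _ (mul_pos hs ht)).hasDerivAt.comp t ((hasDerivAt_id t).const_mul s)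
  simpa [mul_comm, mul_left_comm] using (hd.const_mul c).deriv

theorem const_mul_comp_mul (hf : MemB1 f) (c : ℝ) {s : ℝ} (hs : 0 < s) :
    MemB1 (fun t => c * f (s * t)) := by
  have ⟨hf0, hdiff, hf2, hf'2, htf2⟩ := hf
  have hscale : ∀ g : ℝ → ℝ, IntegrableOn g (Ioi 0) → IntegrableOn (fun t => g (s * t)) (Ioi 0) :=
    fun g hg => (integrableOn_Ioi_comp_mul_left_iff g 0 hs).2 (by simpa using hg)
  refine ⟨?_, fun t ht => ?_, ?_, ?_, ?_⟩
  · have hmaps : MapsTo (fun t : ℝ => s * t) (Ici 0) (Ici 0) := fun x hx => mul_nonneg hs.le hx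
    exact (ContinuousWithinAt.comp (by simpa using hf0) (by fun_prop) hmaps).const_mul c
  · exact ((hdiff _ (mul_pos hs ht)).comp t (by fun_prop)).const_mul c
  · exact (hscale _ (hf2.const_mul (c ^ 2))).congr_fun (fun t _ => by ring) measurableSet_Ioi
  · refine (hscale _ (hf'2.const_mul (c ^ 2 * s ^ 2))).congr_fun (fun t ht => ?_)
      measurableSet_Ioi
    rw [hf.deriv_const_mul_comp_mul c hs ht]
    ring
  · refine (hscale _ (htf2.const_mul (c ^ 2 / s ^ 2))).congr_fun (fun t _ => ?_)
      measurableSet_Ioi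
    field_simp

end MemB1

theorem GLF_const_mul_comp_mul {f : ℝ → ℝ} (hf : MemB1 f) (lam ζ c : ℝ) {s : ℝ} (hs : 0 < s) :
    GLF (ζ / s) lam (fun t => c * f (s * t))
      = s⁻¹ * (c ^ 2 * s ^ 2 * (∫ t in Ioi (0:ℝ), (deriv f t) ^ 2)
        + c ^ 2 / s ^ 2 * (∫ t in Ioi (0:ℝ), (t - ζ) ^ 2 * (f t) ^ 2)
        + lam / 2 * c ^ 4 * (∫ t in Ioi (0:ℝ), (f t) ^ 4)
        - lam * c ^ 2 * (∫ t in Ioi (0:ℝ), (f t) ^ 2)) := by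
  set G : ℝ → ℝ := fun u => c ^ 2 * s ^ 2 * (deriv f u) ^ 2
    + c ^ 2 / s ^ 2 * ((u - ζ) ^ 2 * (f u) ^ 2)
    + lam / 2 * c ^ 4 * (f u) ^ 4 - lam * c ^ 2 * (f u) ^ 2 with hG
  have hcomp : GLF (ζ / s) lam (fun t => c * f (s * t)) = ∫ t in Ioi (0:ℝ), G (s * t) := by
    refine setIntegral_congr_fun measurableSet_Ioi fun t ht => ?_
    rw [hG, hf.deriv_const_mul_comp_mul c hs ht]
    field_simp
  have hsubst : ∫ t in Ioi (0:ℝ), G (s * t) = s⁻¹ * ∫ u in Ioi (0:ℝ), G u := by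
    simpa using integral_comp_mul_left_Ioi G 0 hs
  have i1 := hf.2.2.2.1.const_mul (c ^ 2 * s ^ 2)
  have i2 := (hf.integrableOn_sub_sq_mul_sq ζ).const_mul (c ^ 2 / s ^ 2)
  have i3 := hf.integrableOn_pow_four.const_mul (lam / 2 * c ^ 4)
  have i4 := hf.2.2.1.const_mul (lam * c ^ 2)
  rw [hcomp, hsubst, hG, integral_sub ((i1.fun_add i2).fun_add i3) i4,
    integral_add (i1.fun_add i2) i3, integral_add i1 i2, integral_const_mul,
    integral_const_mul, integral_const_mul, integral_const_mul]

theorem add_two_mul_eq_zero_of_forall_le {a b : ℝ}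
    (h : ∀ c : ℝ, a + b ≤ a * c ^ 2 + b * c ^ 4) : a + 2 * b = 0 := by
  have hmin : IsMinOn (fun c : ℝ => a * c ^ 2 + b * c ^ 4) univ 1 := fun c _ => by
    simpa using h c
  have hd : HasDerivAt (fun c : ℝ => a * c ^ 2 + b * c ^ 4) (a * 2 + b * 4) 1 := by
    simpa using ((hasDerivAt_pow 2 (1:ℝ)).const_mul a).fun_add
      ((hasDerivAt_pow 4 (1:ℝ)).const_mul b)
  linarith [(hmin.isLocalMin univ_mem).hasDerivAt_eq_zero hd]

theorem sub_three_mul_sub_eq_zero_of_forall_le {a b e : ℝ}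
    (h : ∀ s > 0, a + b + e ≤ a * s + b / s ^ 3 + e / s) : a - 3 * b - e = 0 := by
  have hmin : IsMinOn (fun s : ℝ => a * s + b / s ^ 3 + e / s) (Ioi 0) 1 := fun s hs => by
    simpa using h s hs
  have hinv : HasDerivAt (fun s : ℝ => s⁻¹) (-1) 1 := by
    simpa using hasDerivAt_inv (one_ne_zero : (1:ℝ) ≠ 0)
  have hd : HasDerivAt (fun s : ℝ => a * s + b / s ^ 3 + e / s) (a + b * (3 * -1) + e * -1) 1 := by
    simpa [div_eq_mul_inv] using (((hasDerivAt_id (1:ℝ)).const_mul a).fun_add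
      ((hinv.fun_pow 3).const_mul b)).fun_add (hinv.const_mul e)
  linarith [(hmin.isLocalMin (Ioi_mem_nhds one_pos)).hasDerivAt_eq_zero hd]

theorem virial_identities_general (lam ζ : ℝ) (f : ℝ → ℝ)
    (hmin : IsGlobalMin lam ζ f) :
    ((∫ t in Ioi (0:ℝ), (deriv f t) ^ 2) - (∫ t in Ioi (0:ℝ), (t - ζ) ^ 2 * (f t) ^ 2)
        + lam / 4 * (∫ t in Ioi (0:ℝ), (f t) ^ 4) = 0) ∧
    (2 * (∫ t in Ioi (0:ℝ), (deriv f t) ^ 2)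
        + 5 * lam / 4 * (∫ t in Ioi (0:ℝ), (f t) ^ 4)
        = lam * ∫ t in Ioi (0:ℝ), (f t) ^ 2) ∧
    (2 * (∫ t in Ioi (0:ℝ), (t - ζ) ^ 2 * (f t) ^ 2)
        + 3 * lam / 4 * (∫ t in Ioi (0:ℝ), (f t) ^ 4)
        = lam * ∫ t in Ioi (0:ℝ), (f t) ^ 2) := by
  obtain ⟨hf, hle⟩ := hmin
  have hscaled := GLF_const_mul_comp_mul hf lam ζ
  have hbase := hscaled 1 one_pos
  simp only [div_one, one_mul, mul_one, one_pow, inv_one] at hbase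
  set A := ∫ t in Ioi (0:ℝ), (deriv f t) ^ 2
  set B := ∫ t in Ioi (0:ℝ), (t - ζ) ^ 2 * (f t) ^ 2
  set C := ∫ t in Ioi (0:ℝ), (f t) ^ 4
  set D := ∫ t in Ioi (0:ℝ), (f t) ^ 2
  have hamp := add_two_mul_eq_zero_of_forall_le (a := A + B - lam * D) (b := lam / 2 * C)
    fun c => by
      have h := hle ζ _ (hf.const_mul_comp_mul c one_pos)
      rw [hbase, ← div_one ζ, hscaled c one_pos] at h
      linear_combination h
  have hdil := sub_three_mul_sub_eq_zero_of_forall_le (a := A) (b := B) (e := lam / 2 * C - lam * D)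
    fun s hs => by
      have h := hle (ζ / s) _ (hf.const_mul_comp_mul 1 hs)
      rw [hbase, hscaled 1 hs] at h
      field_simp at h ⊢
      linear_combination h
  exact ⟨by linear_combination hamp / 2 + hdil / 2, by linear_combination 3 / 2 * hamp + hdil / 2,
    by linear_combination hamp / 2 - hdil / 2⟩

/-- virial-type identities at a global minimum `(ζ, f)` of
`(z,φ) ↦ F_{z,λ}(φ)` for `Θ₀ ≤ λ ≤ 1`. -/
theorem virial_identities (lam ζ : ℝ) (f : ℝ → ℝ)
    (hlam0 : Theta0 ≤ lam) (hlam1 : lam ≤ 1)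
    (hmin : IsGlobalMin lam ζ f) (hfpos : ∀ t : ℝ, 0 ≤ t → 0 ≤ f t) :
    ((∫ t in Ioi (0:ℝ), (deriv f t) ^ 2) - (∫ t in Ioi (0:ℝ), (t - ζ) ^ 2 * (f t) ^ 2)
        + lam / 4 * (∫ t in Ioi (0:ℝ), (f t) ^ 4) = 0) ∧
    (2 * (∫ t in Ioi (0:ℝ), (deriv f t) ^ 2)
        + 5 * lam / 4 * (∫ t in Ioi (0:ℝ), (f t) ^ 4)
        = lam * ∫ t in Ioi (0:ℝ), (f t) ^ 2) ∧
    (2 * (∫ t in Ioi (0:ℝ), (t - ζ) ^ 2 * (f t) ^ 2)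
        + 3 * lam / 4 * (∫ t in Ioi (0:ℝ), (f t) ^ 4)
        = lam * ∫ t in Ioi (0:ℝ), (f t) ^ 2) :=
  virial_identities_general lam ζ f hmin
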